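/- arXiv:2004.05145 — 3 statements merged into one kernel-verified Lean document; each statement's English description precedes it below -/
import Mathlib

section
/- The set of sums of four squares of elements of the middle-thirds Cantor set is the full interval [0,4]; that is, {x_1^2 + x_2^2 + x_3^2 + x_4^2 : x_1, x_2, x_3, x_4 ∈ 𝒞} = [0,4]. -/
/-- The middle-thirds Cantor set: all reals of the form `∑ tᵢ / 3^i` (`i ≥ 1`)
with each `tᵢ ∈ {0, 2}`. -/
def middleThirdsCantor : Set ℝ :=
  {x : ℝ | ∃ t : ℕ → ℝ, (∀ i, t i = 0 ∨ t i = 2) ∧ x = ∑' i : ℕ, t i / 3 ^ (i + 1)}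

/-!
A cell `⟨a, g⟩` stands for the copy `a + g • 𝒞` of the Cantor set, which lies in `[a, a + g]`;
squaring maps it into an interval of length `w = (a + g)² - a²`. Its two thirds (`d = 0, 2`)
square into two subintervals of lengths between `w / 9` and `5 w / 9`, separated by a gap of
length exactly `w / 3`. If the widths of a family of at least four cells are within a factor 9
of each other, the other cells contribute total width at least `3 · w / 9 ≥ w / 3` when the
widest cell is split, so the two sum-intervals of the children cover the sum-interval of the
family, and the refined family is again balanced. Iterating, the total width decays
geometrically, so every point of the sum-interval is a limit of sums of squares of Cantor
points; these sums form a compact set.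
-/

open Function

theorem middleThirdsCantor_eq_cantorSet : middleThirdsCantor = cantorSet := by
  rw [cantorSet_eq_zero_two_ofDigits]
  ext x
  constructor
  · rintro ⟨t, ht, rfl⟩
    refine ⟨fun i => if t i = 0 then 0 else 2, fun i => ?_, tsum_congr fun i => ?_⟩ <;>
      rcases ht i with h | h <;> simp [Real.ofDigitsTerm, h, div_eq_mul_inv]
  · rintro ⟨a, ha, rfl⟩
    refine ⟨fun i => a i, fun i => ?_,
      tsum_congr fun i => by simp [Real.ofDigitsTerm, div_eq_mul_inv]⟩
    have : (a i : ℕ) = 0 ∨ (a i : ℕ) = 2 := by have := ha i; omega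
    rcases this with h | h <;> simp [h]

lemma add_div_three_mem_cantorSet {d x : ℝ} (hd : d = 0 ∨ d = 2) (hx : x ∈ cantorSet) :
    (d + x) / 3 ∈ cantorSet := by
  rw [cantorSet_eq_union_halves]
  rcases hd with rfl | rfl
  · exact .inl ⟨x, hx, by simp⟩
  · exact .inr ⟨x, hx, rfl⟩

lemma Finset.sum_comp_update_eq_add_sum_erase {ι α M : Type*} [Fintype ι] [DecidableEq ι]
    [AddCommMonoid M] (F : α → M) (c : ι → α) (i : ι) (p : α) :
    ∑ j, F (update c i p j) = F p + ∑ j ∈ Finset.univ.erase i, F (c j) := by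
  simp_rw [apply_update (fun _ => F), Finset.sum_update_of_mem (Finset.mem_univ i),
    Finset.sdiff_singleton_eq_erase]

structure CantorCell where
  left : ℝ
  len : ℝ

namespace CantorCell

def sqWidth (p : CantorCell) : ℝ := (p.left + p.len) ^ 2 - p.left ^ 2

noncomputable def child (p : CantorCell) (d : ℝ) : CantorCell := ⟨p.left + d * p.len / 3, p.len / 3⟩

variable {p : CantorCell} {d : ℝ}

lemma sqWidth_nonneg (hl : 0 ≤ p.left) (hg : 0 ≤ p.len) : 0 ≤ p.sqWidth := by
  unfold sqWidth; nlinarith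

lemma sqWidth_le_nine_mul_sqWidth_child (hl : 0 ≤ p.left) (hg : 0 ≤ p.len)
    (hd : d = 0 ∨ d = 2) : p.sqWidth ≤ 9 * (p.child d).sqWidth := by
  unfold sqWidth child
  rcases hd with rfl | rfl <;> nlinarith [mul_nonneg hl hg]

lemma sqWidth_child_le (hl : 0 ≤ p.left) (hg : 0 ≤ p.len) (hd : d = 0 ∨ d = 2) :
    (p.child d).sqWidth ≤ 5 / 9 * p.sqWidth := by
  unfold sqWidth child
  rcases hd with rfl | rfl <;> nlinarith [mul_nonneg hl hg]

lemma exists_child_mem_Icc {L H z : ℝ} (hgap : p.sqWidth / 3 ≤ H - L)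
    (hz : z ∈ Set.Icc (p.left ^ 2 + L) ((p.left + p.len) ^ 2 + H)) :
    ∃ d, (d = 0 ∨ d = 2) ∧
      z ∈ Set.Icc ((p.child d).left ^ 2 + L) (((p.child d).left + (p.child d).len) ^ 2 + H) := by
  unfold sqWidth at hgap
  simp only [child, Set.mem_Icc] at hz ⊢
  by_cases hlow : z ≤ (p.left + p.len / 3) ^ 2 + H
  · exact ⟨0, .inl rfl, by linarith, by linarith⟩
  · refine ⟨2, .inr rfl, ?_, ?_⟩ <;> nlinarith

variable {ι : Type*} {c : ι → CantorCell}

structure IsBalanced (c : ι → CantorCell) : Prop where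
  left_nonneg : ∀ i, 0 ≤ (c i).left
  len_nonneg : ∀ i, 0 ≤ (c i).len
  sqWidth_le : ∀ i j, (c i).sqWidth ≤ 9 * (c j).sqWidth

lemma IsBalanced.update_child [DecidableEq ι] {i : ι} {d : ℝ} (h : IsBalanced c)
    (hmax : ∀ j, (c j).sqWidth ≤ (c i).sqWidth) (hd : d = 0 ∨ d = 2) :
    IsBalanced (update c i ((c i).child d)) := by
  have hl := h.left_nonneg i
  have hg := h.len_nonneg i
  have bounds j : (update c i ((c i).child d) j).sqWidth ≤ (c i).sqWidth ∧
      (c i).sqWidth ≤ 9 * (update c i ((c i).child d) j).sqWidth := by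
    rcases eq_or_ne j i with rfl | hj
    · have := sqWidth_child_le hl hg hd
      have := sqWidth_nonneg hl hg
      simp only [update_self]
      exact ⟨by linarith, sqWidth_le_nine_mul_sqWidth_child hl hg hd⟩
    · simpa [hj] using ⟨hmax j, h.sqWidth_le i j⟩
  have hd0 : 0 ≤ d := by rcases hd with rfl | rfl <;> norm_num
  refine ⟨fun j => ?_, fun j => ?_, fun j k => (bounds j).1.trans (bounds k).2⟩ <;>
    rcases eq_or_ne j i with rfl | hj
  · simp only [update_self, child]; positivity
  · simpa [hj] using h.left_nonneg j
  · simp only [update_self, child]; positivity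
  · simpa [hj] using h.len_nonneg j

variable [Fintype ι]

variable (c) in
def sqSums : Set ℝ :=
  (fun x => ∑ i, ((c i).left + (c i).len * x i) ^ 2) '' Set.univ.pi fun _ => cantorSet

variable (c) in
def sqSumIcc : Set ℝ :=
  Set.Icc (∑ i, (c i).left ^ 2) (∑ i, ((c i).left + (c i).len) ^ 2)

lemma isCompact_sqSums : IsCompact (sqSums c) :=
  (isCompact_univ_pi fun _ => isCompact_cantorSet).image (by fun_prop)

lemma sum_left_sq_mem_sqSums : ∑ i, (c i).left ^ 2 ∈ sqSums c :=
  ⟨0, fun _ _ => zero_mem_cantorSet, by simp⟩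

lemma sqSums_subset_sqSumIcc (hl : ∀ i, 0 ≤ (c i).left) (hg : ∀ i, 0 ≤ (c i).len) :
    sqSums c ⊆ sqSumIcc c := by
  rintro _ ⟨x, hx, rfl⟩
  have hx01 i : x i ∈ Set.Icc 0 1 := cantorSet_subset_unitInterval (hx i trivial)
  constructor <;> refine Finset.sum_le_sum fun i _ => ?_
  · have := mul_nonneg (hg i) (hx01 i).1
    gcongr
    · exact hl i
    · linarith
  · have := mul_le_of_le_one_right (hg i) (hx01 i).2
    have := mul_nonneg (hg i) (hx01 i).1
    gcongr
    linarith [hl i]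

/-- Splitting the widest of `n` cells removes at least `4 / 9` of its square-width, hence at
least `4 / (9 n)` of the total. -/
noncomputable def decayRate (n : ℕ) : ℝ := 1 - 4 / (9 * n)

lemma decayRate_nonneg (n : ℕ) : 0 ≤ decayRate n := by
  rw [decayRate, sub_nonneg]
  rcases n.eq_zero_or_pos with rfl | hn
  · simp
  · rw [div_le_one (by positivity)]
    have : (1 : ℝ) ≤ n := by exact_mod_cast hn
    linarith

lemma decayRate_lt_one {n : ℕ} (hn : 0 < n) : decayRate n < 1 := by
  rw [decayRate, sub_lt_self_iff]
  positivity

lemma sum_sqWidth_eq :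
    ∑ i, (c i).sqWidth = ∑ i, ((c i).left + (c i).len) ^ 2 - ∑ i, (c i).left ^ 2 :=
  Finset.sum_sub_distrib ..

section

variable [DecidableEq ι]

lemma IsBalanced.sqWidth_div_three_le_sum_erase (h : IsBalanced c) (hcard : 4 ≤ Fintype.card ι)
    (i : ι) : (c i).sqWidth / 3 ≤ ∑ j ∈ Finset.univ.erase i, (c j).sqWidth := by
  have hsum := (Finset.univ.erase i).card_nsmul_le_sum (fun j => (c j).sqWidth)
    ((c i).sqWidth / 9) fun j _ => by linarith [h.sqWidth_le i j]
  rw [nsmul_eq_mul, Finset.card_erase_of_mem (Finset.mem_univ i), Finset.card_univ] at hsum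
  have hcard' : (3 : ℝ) ≤ ((Fintype.card ι - 1 : ℕ) : ℝ) := by norm_cast; omega
  have := sqWidth_nonneg (h.left_nonneg i) (h.len_nonneg i)
  nlinarith

variable {i : ι} {d : ℝ}

lemma sqSums_update_child_subset (hd : d = 0 ∨ d = 2) :
    sqSums (update c i ((c i).child d)) ⊆ sqSums c := by
  rintro _ ⟨x, hx, rfl⟩
  refine ⟨update x i ((d + x i) / 3), fun j _ => ?_, Finset.sum_congr rfl fun j _ => ?_⟩ <;>
    rcases eq_or_ne j i with rfl | hj
  · simpa using add_div_three_mem_cantorSet hd (hx j trivial)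
  · simpa [hj] using hx j trivial
  · simp only [update_self, child]; ring
  · simp [hj]

lemma IsBalanced.exists_update_child_mem_sqSumIcc (h : IsBalanced c)
    (hcard : 4 ≤ Fintype.card ι) {z : ℝ} (hz : z ∈ sqSumIcc c) (i : ι) :
    ∃ d, (d = 0 ∨ d = 2) ∧ z ∈ sqSumIcc (update c i ((c i).child d)) := by
  have hgap := h.sqWidth_div_three_le_sum_erase hcard i
  unfold sqSumIcc at hz ⊢
  rw [← Finset.add_sum_erase _ _ (Finset.mem_univ i),
    ← Finset.add_sum_erase _ _ (Finset.mem_univ i)] at hz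
  obtain ⟨d, hd, hzd⟩ := (c i).exists_child_mem_Icc (by rwa [← Finset.sum_sub_distrib]) hz
  refine ⟨d, hd, ?_⟩
  rwa [Finset.sum_comp_update_eq_add_sum_erase (fun p : CantorCell => p.left ^ 2),
    Finset.sum_comp_update_eq_add_sum_erase (fun p : CantorCell => (p.left + p.len) ^ 2)]

lemma sum_sqWidth_update_child_le (h : IsBalanced c)
    (hmax : ∀ j, (c j).sqWidth ≤ (c i).sqWidth) (hd : d = 0 ∨ d = 2) :
    ∑ j, (update c i ((c i).child d) j).sqWidth ≤
      decayRate (Fintype.card ι) * ∑ j, (c j).sqWidth := by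
  have hchild := sqWidth_child_le (h.left_nonneg i) (h.len_nonneg i) hd
  have hW := Finset.sum_le_card_nsmul Finset.univ _ _ fun j _ => hmax j
  rw [nsmul_eq_mul, Finset.card_univ] at hW
  have hn : (0 : ℝ) < Fintype.card ι := by
    exact_mod_cast Fintype.card_pos_iff.mpr ⟨i⟩
  have hdrop : 4 / (9 * Fintype.card ι) * ∑ j, (c j).sqWidth ≤ 4 / 9 * (c i).sqWidth := by
    rw [div_mul_eq_mul_div, div_le_iff₀ (by positivity)]
    nlinarith
  rw [decayRate, Finset.sum_comp_update_eq_add_sum_erase sqWidth,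
    ← Finset.add_sum_erase _ _ (Finset.mem_univ i)] at *
  linarith

end

lemma IsBalanced.exists_mem_sqSums_abs_sub_le (h : IsBalanced c) (hcard : 4 ≤ Fintype.card ι)
    (n : ℕ) {z : ℝ} (hz : z ∈ sqSumIcc c) :
    ∃ y ∈ sqSums c, |z - y| ≤ decayRate (Fintype.card ι) ^ n * ∑ j, (c j).sqWidth := by
  classical
  induction n generalizing c with
  | zero =>
    refine ⟨_, sum_left_sq_mem_sqSums, ?_⟩
    rw [pow_zero, one_mul, sum_sqWidth_eq, abs_of_nonneg (by linarith [hz.1])]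
    linarith [hz.2]
  | succ n ih =>
    have : Nonempty ι := Fintype.card_pos_iff.mp (by omega)
    obtain ⟨i, -, hmax⟩ := Finset.univ.exists_max_image (fun j => (c j).sqWidth)
      Finset.univ_nonempty
    replace hmax j : (c j).sqWidth ≤ (c i).sqWidth := hmax j (Finset.mem_univ j)
    obtain ⟨d, hd, hzd⟩ := h.exists_update_child_mem_sqSumIcc hcard hz i
    obtain ⟨y, hy, hzy⟩ := ih (h.update_child hmax hd) hzd
    refine ⟨y, sqSums_update_child_subset hd hy, hzy.trans ?_⟩
    rw [pow_succ, mul_assoc]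
    gcongr
    · exact pow_nonneg (decayRate_nonneg _) n
    · exact sum_sqWidth_update_child_le h hmax hd

lemma IsBalanced.sqSums_eq (h : IsBalanced c) (hcard : 4 ≤ Fintype.card ι) :
    sqSums c = sqSumIcc c := by
  refine (sqSums_subset_sqSumIcc h.left_nonneg h.len_nonneg).antisymm fun z hz => ?_
  choose y hy hzy using fun n => h.exists_mem_sqSums_abs_sub_le hcard n hz
  have hbound : Filter.Tendsto (fun n => decayRate (Fintype.card ι) ^ n * ∑ j, (c j).sqWidth)
      Filter.atTop (nhds 0) := by
    simpa using (tendsto_pow_atTop_nhds_zero_of_lt_one (decayRate_nonneg _)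
      (decayRate_lt_one (by omega))).mul_const _
  have hlim : Filter.Tendsto y Filter.atTop (nhds z) := by
    rw [tendsto_iff_dist_tendsto_zero]
    refine squeeze_zero (fun _ => dist_nonneg) (fun n => ?_) hbound
    rw [dist_comm, Real.dist_eq]
    exact hzy n
  exact isCompact_sqSums.isClosed.mem_of_tendsto hlim (.of_forall hy)

end CantorCell

theorem image_sum_sq_pi_cantorSet {ι : Type*} [Fintype ι] (hcard : 4 ≤ Fintype.card ι) :
    (fun x : ι → ℝ => ∑ i, x i ^ 2) '' Set.univ.pi (fun _ => cantorSet) =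
      Set.Icc 0 (Fintype.card ι : ℝ) := by
  have h : CantorCell.IsBalanced fun _ : ι => (⟨0, 1⟩ : CantorCell) :=
    ⟨fun _ => le_rfl, fun _ => zero_le_one, fun _ _ => by norm_num [CantorCell.sqWidth]⟩
  simpa [CantorCell.sqSums, CantorCell.sqSumIcc] using h.sqSums_eq hcard

theorem four_squares_of_cantor_eq_Icc :
    {x : ℝ | ∃ x₁ ∈ middleThirdsCantor, ∃ x₂ ∈ middleThirdsCantor,
        ∃ x₃ ∈ middleThirdsCantor, ∃ x₄ ∈ middleThirdsCantor,
          x = x₁ ^ 2 + x₂ ^ 2 + x₃ ^ 2 + x₄ ^ 2} = Set.Icc (0 : ℝ) 4 := by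
  have h := image_sum_sq_pi_cantorSet (ι := Fin 4) le_rfl
  rw [Fintype.card_fin, Nat.cast_ofNat] at h
  rw [middleThirdsCantor_eq_cantorSet, ← h]
  ext z
  constructor
  · rintro ⟨x₁, h₁, x₂, h₂, x₃, h₃, x₄, h₄, rfl⟩
    exact ⟨![x₁, x₂, x₃, x₄], fun i _ => by fin_cases i <;> assumption,
      by simp [Fin.sum_univ_four]⟩
  · rintro ⟨x, hx, rfl⟩
    exact ⟨x 0, hx 0 trivial, x 1, hx 1 trivial, x 2, hx 2 trivial, x 3, hx 3 trivial,
      Fin.sum_univ_four _⟩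
end

section
/- For every integer k ≥ 3, writing a = (3^k − 1)/3^k, the closed interval [a^3, a] is contained in the fourfold product set 𝒞 · 𝒞 · 𝒞 · 𝒞 = {x_1·x_2·x_3·x_4 : x_1, x_2, x_3, x_4 ∈ 𝒞}. -/
open Set Filter Topology

theorem hasSum_two_div_three_pow : HasSum (fun i : ℕ => (2 : ℝ) / 3 ^ (i + 1)) 1 := by
  have h := (hasSum_geometric_of_lt_one (r := (1 : ℝ) / 3) (by norm_num) (by norm_num)).mul_left
    (2 / 3)
  rw [show (2 : ℝ) / 3 * (1 - 1 / 3)⁻¹ = 1 by norm_num] at h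
  refine (funext fun i => ?_ : (fun i : ℕ => (2 : ℝ) / 3 ^ (i + 1)) = _) ▸ h
  rw [one_div_pow, pow_succ]
  ring

theorem summable_cantor_series {t : ℕ → ℝ} (ht : ∀ i, t i = 0 ∨ t i = 2) :
    Summable fun i => t i / 3 ^ (i + 1) := by
  have hbound (i : ℕ) : 0 ≤ t i ∧ t i ≤ 2 := by rcases ht i with h | h <;> rw [h] <;> norm_num
  refine hasSum_two_div_three_pow.summable.of_nonneg_of_le
    (fun i => div_nonneg (hbound i).1 (by positivity)) fun i => ?_
  gcongr
  exact (hbound i).2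

theorem mem_middleThirdsCantor_iff {x : ℝ} :
    x ∈ middleThirdsCantor ↔
      ∃ t : ℕ → ℝ, (∀ i, t i = 0 ∨ t i = 2) ∧ HasSum (fun i => t i / 3 ^ (i + 1)) x := by
  constructor
  · rintro ⟨t, ht, rfl⟩
    exact ⟨t, ht, (summable_cantor_series ht).hasSum⟩
  · rintro ⟨t, ht, hx⟩
    exact ⟨t, ht, hx.tsum_eq.symm⟩

theorem zero_mem_middleThirdsCantor : (0 : ℝ) ∈ middleThirdsCantor :=
  mem_middleThirdsCantor_iff.2 ⟨0, fun _ => Or.inl rfl, by simp [hasSum_zero]⟩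

theorem one_sub_mem_middleThirdsCantor {x : ℝ} (hx : x ∈ middleThirdsCantor) :
    1 - x ∈ middleThirdsCantor := by
  obtain ⟨t, ht, hsum⟩ := mem_middleThirdsCantor_iff.1 hx
  refine mem_middleThirdsCantor_iff.2 ⟨fun i => 2 - t i, fun i => ?_, ?_⟩
  · rcases ht i with h | h <;> simp [h]
  · simpa only [sub_div] using hasSum_two_div_three_pow.sub hsum

theorem one_mem_middleThirdsCantor : (1 : ℝ) ∈ middleThirdsCantor := by
  simpa using one_sub_mem_middleThirdsCantor zero_mem_middleThirdsCantor

theorem div_three_mem_middleThirdsCantor {x : ℝ} (hx : x ∈ middleThirdsCantor) :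
    x / 3 ∈ middleThirdsCantor := by
  obtain ⟨t, ht, hsum⟩ := mem_middleThirdsCantor_iff.1 hx
  let t' (i : ℕ) : ℝ := if i = 0 then 0 else t (i - 1)
  refine mem_middleThirdsCantor_iff.2 ⟨t', fun i => ?_, ?_⟩
  · by_cases hi : i = 0
    · exact .inl (if_pos hi)
    · simpa only [t', if_neg hi] using ht (i - 1)
  · have h := HasSum.zero_add (f := fun i => t' i / (3 : ℝ) ^ (i + 1)) (m := x / 3)
      (by simpa [t', pow_succ, div_div] using hsum.div_const 3)
    simpa [t'] using h

theorem div_three_pow_mem_middleThirdsCantor {x : ℝ} (hx : x ∈ middleThirdsCantor) (k : ℕ) :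
    x / 3 ^ k ∈ middleThirdsCantor := by
  induction k with
  | zero => simpa using hx
  | succ k ih => simpa [pow_succ, div_div] using div_three_mem_middleThirdsCantor ih

/-- `q i` is the right endpoint of an interval `[q i - ε, q i]`; taking `i = j` shows
`26 * ε ≤ q i`. -/
def BalancedTriple (ε : ℝ) (q : Fin 3 → ℝ) : Prop :=
  ∀ i j, q i ≤ 2 * q j - 26 * ε

namespace BalancedTriple

theorem sub_digits {δ : ℝ} {q u : Fin 3 → ℝ} (hδ : 0 ≤ δ) (hq : BalancedTriple (3 * δ) q)
    (hu : ∀ i, u i = 0 ∨ u i = 2) : BalancedTriple δ fun i => q i - δ * u i := by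
  intro i j
  have := hq i j
  rcases hu i with hi | hi <;> rcases hu j with hj | hj <;> simp only [hi, hj] <;> linarith

theorem exists_digits {δ x : ℝ} {q : Fin 3 → ℝ} (hδ : 0 < δ) (hq : BalancedTriple (3 * δ) q)
    (hx : x ∈ Icc (∏ i, (q i - 3 * δ)) (∏ i, q i)) :
    ∃ u : Fin 3 → ℝ, (∀ i, u i = 0 ∨ u i = 2) ∧
      x ∈ Icc (∏ i, (q i - δ * u i - δ)) (∏ i, (q i - δ * u i)) := by
  simp only [Fin.prod_univ_three, mem_Icc] at hx ⊢
  obtain ⟨hlo, hhi⟩ := hx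
  have h₀₁ := hq 0 1; have h₀₂ := hq 0 2; have h₁₀ := hq 1 0
  have h₁₂ := hq 1 2; have h₂₀ := hq 2 0; have h₂₁ := hq 2 1
  have h₀ := hq 0 0; have h₁ := hq 1 1; have h₂ := hq 2 2
  set a := q 0
  set b := q 1
  set c := q 2
  have overlap₁ : (a - δ) * (b - δ) * (c - δ) ≤ (a - 2 * δ) * b * c := by
    nlinarith [mul_nonneg (mul_nonneg hδ.le (by linarith : 0 ≤ 2 * a - 78 * δ - b))
        (by linarith : 0 ≤ c),
      mul_nonneg (mul_nonneg hδ.le (by linarith : 0 ≤ 2 * a - 78 * δ - c)) (by linarith : 0 ≤ b),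
      mul_nonneg (mul_nonneg hδ.le hδ.le) (by linarith : 0 ≤ 38 * b + 38 * c - a + δ)]
  have overlap₂ : (a - 3 * δ) * (b - δ) * (c - δ) ≤ (a - 2 * δ) * (b - 2 * δ) * c := by
    nlinarith [mul_nonneg hδ.le (sq_nonneg (a - c)),
      mul_nonneg (mul_nonneg hδ.le (by linarith : 0 ≤ 4 * b - a - c - 156 * δ))
        (by linarith : 0 ≤ a + c - 3 * δ), mul_nonneg (mul_nonneg hδ.le hδ.le) hδ.le]
  have overlap₃ :
      (a - 3 * δ) * (b - 3 * δ) * (c - δ) ≤ (a - 2 * δ) * (b - 2 * δ) * (c - 2 * δ) := by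
    nlinarith [mul_nonneg hδ.le (sq_nonneg (a - b)),
      mul_nonneg (mul_nonneg hδ.le (by linarith : 0 ≤ 4 * c - a - b - 156 * δ))
        (by linarith : 0 ≤ a + b - 5 * δ), mul_nonneg (mul_nonneg hδ.le hδ.le) hδ.le]
  obtain ⟨u₀, u₁, u₂, hu₀, hu₁, hu₂, hlo', hhi'⟩ : ∃ u₀ u₁ u₂ : ℝ,
      (u₀ = 0 ∨ u₀ = 2) ∧ (u₁ = 0 ∨ u₁ = 2) ∧ (u₂ = 0 ∨ u₂ = 2) ∧
      (a - δ * u₀ - δ) * (b - δ * u₁ - δ) * (c - δ * u₂ - δ) ≤ x ∧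
      x ≤ (a - δ * u₀) * (b - δ * u₁) * (c - δ * u₂) := by
    by_cases h₁ : (a - δ) * (b - δ) * (c - δ) ≤ x
    · exact ⟨0, 0, 0, .inl rfl, .inl rfl, .inl rfl, by linarith, by linarith⟩
    by_cases h₂ : (a - 3 * δ) * (b - δ) * (c - δ) ≤ x
    · exact ⟨2, 0, 0, .inr rfl, .inl rfl, .inl rfl, by linarith, by linarith⟩
    by_cases h₃ : (a - 3 * δ) * (b - 3 * δ) * (c - δ) ≤ x
    · exact ⟨2, 2, 0, .inr rfl, .inr rfl, .inl rfl, by linarith, by linarith⟩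
    · exact ⟨2, 2, 2, .inr rfl, .inr rfl, .inr rfl, by linarith, by linarith⟩
  refine ⟨![u₀, u₁, u₂], fun i => ?_, hlo', hhi'⟩
  fin_cases i
  exacts [hu₀, hu₁, hu₂]

theorem exists_digit_seq {ε x : ℝ} {q : Fin 3 → ℝ} (hε : 0 < ε) (hq : BalancedTriple ε q)
    (hx : x ∈ Icc (∏ i, (q i - ε)) (∏ i, q i)) :
    ∃ u : ℕ → Fin 3 → ℝ, (∀ n i, u n i = 0 ∨ u n i = 2) ∧ ∀ n,
      x ∈ Icc (∏ i, (q i - ε * ∑ m ∈ Finset.range n, u m i / 3 ^ (m + 1) - ε / 3 ^ n))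
        (∏ i, (q i - ε * ∑ m ∈ Finset.range n, u m i / 3 ^ (m + 1))) := by
  let Bracketed (n : ℕ) (p : Fin 3 → ℝ) : Prop :=
    BalancedTriple (ε / 3 ^ n) p ∧ x ∈ Icc (∏ i, (p i - ε / 3 ^ n)) (∏ i, p i)
  have step (n : ℕ) (p : Fin 3 → ℝ) (hp : Bracketed n p) : ∃ v : Fin 3 → ℝ,
      (∀ i, v i = 0 ∨ v i = 2) ∧ Bracketed (n + 1) fun i => p i - ε / 3 ^ (n + 1) * v i := by
    obtain ⟨hbal, hxp⟩ := hp
    rw [show ε / 3 ^ n = 3 * (ε / 3 ^ (n + 1)) by rw [pow_succ]; field_simp] at hbal hxp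
    obtain ⟨v, hv, hxv⟩ := hbal.exists_digits (by positivity) hxp
    exact ⟨v, hv, hbal.sub_digits (by positivity) hv, hxv⟩
  choose! next hnext_digits hnext_bracketed using step
  obtain ⟨p, hp_zero, hp_succ⟩ : ∃ p : ℕ → Fin 3 → ℝ, p 0 = q ∧
      ∀ n, p (n + 1) = fun i => p n i - ε / 3 ^ (n + 1) * next n (p n) i :=
    ⟨fun n => Nat.rec q (fun n p i => p i - ε / 3 ^ (n + 1) * next n p i) n, rfl, fun _ => rfl⟩
  have hbracketed (n : ℕ) : Bracketed n (p n) := by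
    induction n with
    | zero => simpa [Bracketed, hp_zero] using ⟨hq, hx⟩
    | succ n ih => rw [hp_succ]; exact hnext_bracketed n _ ih
  have hp (n : ℕ) (i : Fin 3) :
      p n i = q i - ε * ∑ m ∈ Finset.range n, next m (p m) i / 3 ^ (m + 1) := by
    induction n with
    | zero => simp [hp_zero]
    | succ n ih =>
      simp only [hp_succ, Finset.sum_range_succ, ih]
      ring
  refine ⟨fun n => next n (p n), fun n => hnext_digits n _ (hbracketed n), fun n => ?_⟩
  simp_rw [← hp]
  exact (hbracketed n).2

end BalancedTriple

theorem eq_prod_of_tendsto_of_mem_Icc {ι : Type*} [Fintype ι] {x : ℝ} {p : ℕ → ι → ℝ}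
    {ε : ℕ → ℝ} {c : ι → ℝ} (hp : ∀ i, Tendsto (fun n => p n i) atTop (𝓝 (c i)))
    (hε : Tendsto ε atTop (𝓝 0)) (hx : ∀ n, x ∈ Icc (∏ i, (p n i - ε n)) (∏ i, p n i)) :
    x = ∏ i, c i := by
  have hlo : Tendsto (fun n => ∏ i, (p n i - ε n)) atTop (𝓝 (∏ i, c i)) :=
    tendsto_finsetProd _ fun i _ => by simpa using (hp i).sub hε
  have hhi : Tendsto (fun n => ∏ i, p n i) atTop (𝓝 (∏ i, c i)) :=
    tendsto_finsetProd _ fun i _ => hp i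
  exact le_antisymm (ge_of_tendsto' hhi fun n => (hx n).2) (le_of_tendsto' hlo fun n => (hx n).1)

theorem BalancedTriple.exists_mem_middleThirdsCantor_eq_prod {ε x : ℝ} {q : Fin 3 → ℝ}
    (hε : 0 < ε) (hq : BalancedTriple ε q) (hx : x ∈ Icc (∏ i, (q i - ε)) (∏ i, q i)) :
    ∃ σ : Fin 3 → ℝ, (∀ i, σ i ∈ middleThirdsCantor) ∧ x = ∏ i, (q i - ε * σ i) := by
  obtain ⟨u, hu, hxu⟩ := hq.exists_digit_seq hε hx
  refine ⟨fun i => ∑' m, u m i / 3 ^ (m + 1), fun i => ⟨_, (hu · i), rfl⟩,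
    eq_prod_of_tendsto_of_mem_Icc (fun i => ?_) ?_ hxu⟩
  · exact ((summable_cantor_series (hu · i)).hasSum.tendsto_sum_nat.const_mul ε).const_sub (q i)
  · exact (tendsto_pow_atTop_atTop_of_one_lt (by norm_num : (1 : ℝ) < 3)).const_div_atTop ε

theorem Icc_subset_fourfold_cantor_product_general (k : ℕ) (hk : 3 ≤ k) :
    Set.Icc ((((3 : ℝ) ^ k - 1) / 3 ^ k) ^ 3) (((3 : ℝ) ^ k - 1) / 3 ^ k) ⊆
      {x : ℝ | ∃ x₁ ∈ middleThirdsCantor, ∃ x₂ ∈ middleThirdsCantor,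
        ∃ x₃ ∈ middleThirdsCantor, ∃ x₄ ∈ middleThirdsCantor,
          x = x₁ * x₂ * x₃ * x₄} := by
  rintro x ⟨hlo, hhi⟩
  have hε : (0 : ℝ) < 1 / 3 ^ k := by positivity
  have h27 : (27 : ℝ) ≤ 3 ^ k := by
    exact_mod_cast (Nat.pow_le_pow_right (by norm_num) hk : 3 ^ 3 ≤ 3 ^ k)
  have hq : BalancedTriple (1 / 3 ^ k) fun _ => 1 := fun _ _ => by
    have : 26 * (1 / 3 ^ k : ℝ) ≤ 1 := by rw [mul_one_div, div_le_one (by positivity)]; linarith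
    dsimp only
    linarith
  have ha : ((3 : ℝ) ^ k - 1) / 3 ^ k = 1 - 1 / 3 ^ k := by field_simp
  have hx : x ∈ Icc (∏ _i : Fin 3, (1 - 1 / 3 ^ k)) (∏ _i : Fin 3, (1 : ℝ)) := by
    rw [ha] at hlo hhi
    refine ⟨by simpa using hlo, ?_⟩
    rw [Finset.prod_const_one]
    linarith
  obtain ⟨σ, hσ, rfl⟩ := hq.exists_mem_middleThirdsCantor_eq_prod hε hx
  have hmem (i : Fin 3) : 1 - 1 / 3 ^ k * σ i ∈ middleThirdsCantor := by
    rw [one_div_mul_eq_div]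
    exact one_sub_mem_middleThirdsCantor (div_three_pow_mem_middleThirdsCantor (hσ i) k)
  exact ⟨_, hmem 0, _, hmem 1, _, hmem 2, 1, one_mem_middleThirdsCantor, by
    rw [Fin.prod_univ_three, mul_one]⟩
end

section
/- For all integers m ≥ 1 and k ≥ 3, setting t = 2·⌈(3^k/(3^k − 1))^{m−1}⌉, the t-fold sumset {x_1^m + x_2^m + … + x_t^m : x_1, …, x_t ∈ 𝒞} contains a closed interval of length 2·(1 − ((3^k − 1)/3^k)^m). -/
open Set Filter Topology

theorem cantorSet_subset_middleThirdsCantor : cantorSet ⊆ middleThirdsCantor := by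
  rw [cantorSet_eq_zero_two_ofDigits]
  rintro _ ⟨d, hd, rfl⟩
  refine ⟨fun i => (d i : ℝ), fun i => ?_, ?_⟩
  · have hdi : (d i : ℕ) ≠ 1 := fun h => hd i (Fin.ext h)
    have : (d i : ℕ) = 0 ∨ (d i : ℕ) = 2 := by omega
    rcases this with h | h <;> simp [h]
  · simp [Real.ofDigits, Real.ofDigitsTerm, div_eq_mul_inv]

theorem one_mem_cantorSet : (1 : ℝ) ∈ cantorSet :=
  Real.ofDigits_const_last_eq_one 2 ▸
    ofDigits_zero_two_sequence_mem_cantorSet (a := fun _ => Fin.last 2) fun _ => by decide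

theorem div_three_mem_cantorSet {x : ℝ} (hx : x ∈ cantorSet) : x / 3 ∈ cantorSet := by
  rw [cantorSet_eq_union_halves]
  exact Or.inl ⟨x, hx, rfl⟩

theorem two_add_div_three_mem_cantorSet {x : ℝ} (hx : x ∈ cantorSet) :
    (2 + x) / 3 ∈ cantorSet := by
  rw [cantorSet_eq_union_halves]
  exact Or.inr ⟨x, hx, rfl⟩

def IsCantorCylinder (a w : ℝ) : Prop :=
  MapsTo (fun x => a + w * x) cantorSet cantorSet

namespace IsCantorCylinder

variable {a w : ℝ}

theorem zero_one : IsCantorCylinder 0 1 := fun x hx => by simpa using hx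

theorem left (h : IsCantorCylinder a w) : IsCantorCylinder a (w / 3) := fun x hx => by
  convert h (div_three_mem_cantorSet hx) using 1
  ring

theorem right (h : IsCantorCylinder a w) : IsCantorCylinder (a + 2 * (w / 3)) (w / 3) :=
  fun x hx => by
    convert h (two_add_div_three_mem_cantorSet hx) using 1
    ring

theorem one_sub_inv_three_pow (k : ℕ) :
    IsCantorCylinder (1 - (3 : ℝ)⁻¹ ^ k) ((3 : ℝ)⁻¹ ^ k) := by
  induction k with
  | zero => simpa using zero_one
  | succ k ih =>
    convert ih.right using 1 <;> ring

theorem mem (h : IsCantorCylinder a w) : a ∈ cantorSet := by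
  simpa using h zero_mem_cantorSet

theorem mem_Icc (h : IsCantorCylinder a w) : a ∈ Icc 0 1 :=
  cantorSet_subset_unitInterval h.mem

theorem add_mem_Icc (h : IsCantorCylinder a w) : a + w ∈ Icc 0 1 :=
  cantorSet_subset_unitInterval (by simpa using h one_mem_cantorSet)

end IsCantorCylinder

theorem exists_mem_Icc_of_chain {α : Type*} [LinearOrder α] {lo hi : ℕ → α} {y : α} (n : ℕ)
    (h₀ : lo 0 ≤ y) (hn : y ≤ hi n) (hchain : ∀ r < n, lo (r + 1) ≤ hi r) :
    ∃ r, y ∈ Icc (lo r) (hi r) := by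
  induction n with
  | zero => exact ⟨0, h₀, hn⟩
  | succ n ih =>
    by_cases hy : lo (n + 1) ≤ y
    · exact ⟨n + 1, hy, hn⟩
    · exact ih ((not_le.1 hy).le.trans (hchain n n.lt_succ_self))
        fun r hr => hchain r (hr.trans n.lt_succ_self)

noncomputable def splitChild {t : ℕ} (a : Fin t → ℝ) (w : ℝ) (r : ℕ) (j : Fin t) : ℝ :=
  a j + if (j : ℕ) < r then 2 * (w / 3) else 0

theorem isCantorCylinder_splitChild {t : ℕ} {a : Fin t → ℝ} {w : ℝ}
    (ha : ∀ j, IsCantorCylinder (a j) w) (r : ℕ) (j : Fin t) :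
    IsCantorCylinder (splitChild a w r j) (w / 3) := by
  unfold splitChild
  split_ifs
  · exact (ha j).right
  · simpa using (ha j).left

section Covering

variable {g : ℝ → ℝ} {μ M : ℝ} {t : ℕ}
  (hμ : ∀ u ∈ Icc (0 : ℝ) 1, ∀ v ∈ Icc (0 : ℝ) 1, u ≤ v → μ * (v - u) ≤ g v - g u)
  (hM : ∀ u ∈ Icc (0 : ℝ) 1, ∀ v ∈ Icc (0 : ℝ) 1, u ≤ v → g v - g u ≤ M * (v - u))
  (hμM : M ≤ (t - 1) * μ)
include hμ hM hμM

theorem sum_splitChild_succ_le {a : Fin t → ℝ} {w : ℝ} (hw : 0 ≤ w)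
    (ha : ∀ j, IsCantorCylinder (a j) w) {r : ℕ} (hr : r < t) :
    ∑ j, g (splitChild a w (r + 1) j) ≤ ∑ j, g (splitChild a w r j + w / 3) := by
  set j₀ : Fin t := ⟨r, hr⟩
  have hc := isCantorCylinder_splitChild ha
  have hoff : ∀ j ≠ j₀, splitChild a w (r + 1) j = splitChild a w r j := by
    intro j hj
    have : (j : ℕ) ≠ r := fun h => hj (Fin.ext h)
    simp only [splitChild, Nat.lt_succ_iff, Nat.le_iff_lt_or_eq, this, or_false]
  have hoff_le : ∀ j ∈ Finset.univ.erase j₀,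
      μ * (w / 3) ≤ g (splitChild a w r j + w / 3) - g (splitChild a w (r + 1) j) := by
    intro j hj
    rw [hoff j (Finset.ne_of_mem_erase hj)]
    simpa using hμ _ (hc r j).mem_Icc _ (hc r j).add_mem_Icc (by linarith)
  have hon_le : -(M * (w / 3)) ≤
      g (splitChild a w r j₀ + w / 3) - g (splitChild a w (r + 1) j₀) := by
    have := hM _ (ha j₀).left.add_mem_Icc _ (ha j₀).right.mem_Icc (by linarith)
    simp only [splitChild, j₀, lt_irrefl, Nat.lt_succ_self, if_true, if_false, add_zero]
    linarith
  have hrest := Finset.card_nsmul_le_sum _ _ _ hoff_le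
  rw [Finset.card_erase_of_mem (Finset.mem_univ _), Finset.card_univ, Fintype.card_fin,
    nsmul_eq_mul, Nat.cast_pred (by omega)] at hrest
  suffices 0 ≤ ∑ j, (g (splitChild a w r j + w / 3) - g (splitChild a w (r + 1) j)) by
    rw [Finset.sum_sub_distrib] at this
    linarith
  rw [← Finset.add_sum_erase _ _ (Finset.mem_univ j₀)]
  nlinarith [mul_le_mul_of_nonneg_right hμM (by positivity : 0 ≤ w / 3)]

theorem exists_splitChild_mem_Icc {a : Fin t → ℝ} {w y : ℝ} (hw : 0 ≤ w)
    (ha : ∀ j, IsCantorCylinder (a j) w) (hy : y ∈ Icc (∑ j, g (a j)) (∑ j, g (a j + w))) :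
    ∃ r, y ∈ Icc (∑ j, g (splitChild a w r j)) (∑ j, g (splitChild a w r j + w / 3)) := by
  have hlast : ∀ j : Fin t, splitChild a w t j + w / 3 = a j + w := fun j => by
    simp only [splitChild, j.isLt, if_true]
    ring
  exact exists_mem_Icc_of_chain t (by simpa [splitChild] using hy.1) (by simpa [hlast] using hy.2)
    fun r hr => sum_splitChild_succ_le hμ hM hμM hw ha hr

theorem exists_cylinders_mem_Icc {y : ℝ} (hy : y ∈ Icc (t * g 0) (t * g 1)) (n : ℕ) :
    ∃ a : Fin t → ℝ, (∀ j, IsCantorCylinder (a j) (3⁻¹ ^ n)) ∧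
      y ∈ Icc (∑ j, g (a j)) (∑ j, g (a j + 3⁻¹ ^ n)) := by
  induction n with
  | zero => exact ⟨0, fun _ => IsCantorCylinder.zero_one, by simpa using hy⟩
  | succ n ih =>
    obtain ⟨a, ha, hya⟩ := ih
    obtain ⟨r, hr⟩ := exists_splitChild_mem_Icc hμ hM hμM (by positivity) ha hya
    rw [pow_succ, ← div_eq_mul_inv]
    exact ⟨splitChild a _ r, isCantorCylinder_splitChild ha r, hr⟩

theorem Icc_subset_sum_cantorSet (hg : Continuous g) :
    Icc (t * g 0) (t * g 1) ⊆ {y | ∃ c : Fin t → ℝ, (∀ j, c j ∈ cantorSet) ∧ ∑ j, g (c j) = y} := by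
  intro y hy
  choose a ha hya using exists_cylinders_mem_Icc hμ hM hμM hy
  let Φ : (Fin t → ℝ) → ℝ := fun c => ∑ j, g (c j)
  have hclosed : IsClosed (Φ '' univ.pi fun _ => cantorSet) :=
    ((isCompact_univ_pi fun _ => isCompact_cantorSet).image (by fun_prop)).isClosed
  have hgap : ∀ n, y - t * (M * 3⁻¹ ^ n) ≤ Φ (a n) := by
    intro n
    have hw : (0 : ℝ) ≤ 3⁻¹ ^ n := by positivity
    have := Finset.sum_le_card_nsmul Finset.univ (fun j => g (a n j + 3⁻¹ ^ n) - g (a n j))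
      (M * 3⁻¹ ^ n) fun j _ => by
        simpa using hM _ (ha n j).mem_Icc _ (ha n j).add_mem_Icc (by linarith)
    simp only [Finset.sum_sub_distrib, Finset.card_univ, Fintype.card_fin, nsmul_eq_mul] at this
    linarith [(hya n).2]
  have hlim : Tendsto (fun n => Φ (a n)) atTop (𝓝 y) := by
    refine tendsto_of_tendsto_of_tendsto_of_le_of_le ?_ tendsto_const_nhds hgap
      fun n => (hya n).1
    simpa [mul_assoc] using ((tendsto_pow_atTop_nhds_zero_of_lt_one (r := (3 : ℝ)⁻¹) (by norm_num)
      (by norm_num)).const_mul (t * M)).const_sub y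
  obtain ⟨c, hc, rfl⟩ := hclosed.mem_of_tendsto hlim
    (Eventually.of_forall fun n => ⟨a n, fun j _ => (ha n j).mem, rfl⟩)
  exact ⟨c, fun j => hc j (mem_univ j), rfl⟩

end Covering

section AffinePower

variable {A : ℝ} (m : ℕ)

theorem deriv_affine_pow (x : ℝ) :
    deriv (fun c => (A + (1 - A) * c) ^ m) x = m * (A + (1 - A) * x) ^ (m - 1) * (1 - A) := by
  rw [(((hasDerivAt_id' x).const_mul (1 - A)).const_add A).fun_pow m |>.deriv, mul_one]

variable (hA₀ : 0 ≤ A) (hA₁ : A ≤ 1)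
include hA₀ hA₁

theorem affine_pow_sub_ge : ∀ u ∈ Icc (0 : ℝ) 1, ∀ v ∈ Icc (0 : ℝ) 1, u ≤ v →
    (1 - A) * m * A ^ (m - 1) * (v - u) ≤ (A + (1 - A) * v) ^ m - (A + (1 - A) * u) ^ m := by
  refine (convex_Icc 0 1).mul_sub_le_image_sub_of_le_deriv (by fun_prop) (by fun_prop) ?_
  intro x hx
  rw [interior_Icc] at hx
  have hpow : A ^ (m - 1) ≤ (A + (1 - A) * x) ^ (m - 1) :=
    pow_le_pow_left₀ hA₀ (by nlinarith [hx.1]) _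
  have := mul_le_mul_of_nonneg_left hpow (by positivity : (0 : ℝ) ≤ m * (1 - A))
  rw [deriv_affine_pow]
  linarith

theorem affine_pow_sub_le : ∀ u ∈ Icc (0 : ℝ) 1, ∀ v ∈ Icc (0 : ℝ) 1, u ≤ v →
    (A + (1 - A) * v) ^ m - (A + (1 - A) * u) ^ m ≤ (1 - A) * m * (v - u) := by
  refine (convex_Icc 0 1).image_sub_le_mul_sub_of_deriv_le (by fun_prop) (by fun_prop) ?_
  intro x hx
  rw [interior_Icc] at hx
  have hpow : (A + (1 - A) * x) ^ (m - 1) ≤ 1 :=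
    pow_le_one₀ (by nlinarith [hx.1]) (by nlinarith [hx.2])
  have := mul_le_mul_of_nonneg_left hpow (by positivity : (0 : ℝ) ≤ m * (1 - A))
  rw [deriv_affine_pow]
  linarith

end AffinePower

theorem exists_Icc_subset_sum_pow_cantorSet {A : ℝ} (hA₀ : 0 < A) (hA : IsCantorCylinder A (1 - A))
    (m : ℕ) : ∃ a b : ℝ, b - a = 2 * (1 - A ^ m) ∧ Icc a b ⊆
      {x | ∃ f : Fin (2 * ⌈A⁻¹ ^ (m - 1)⌉₊) → ℝ, (∀ j, f j ∈ cantorSet) ∧ x = ∑ j, f j ^ m} := by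
  set N := ⌈A⁻¹ ^ (m - 1)⌉₊
  have hA₁ : A ≤ 1 := hA.mem_Icc.2
  have hN : 1 ≤ N * A ^ (m - 1) :=
    calc (1 : ℝ) = A⁻¹ ^ (m - 1) * A ^ (m - 1) := by
          rw [← mul_pow, inv_mul_cancel₀ hA₀.ne', one_pow]
      _ ≤ N * A ^ (m - 1) := by gcongr; exact Nat.le_ceil _
  have hN₁ : (1 : ℝ) ≤ N := by
    by_contra h
    nlinarith [pow_le_one₀ hA₀.le hA₁ (n := m - 1)]
  have hμM : (1 - A) * m ≤ ((2 * N : ℕ) - 1) * ((1 - A) * m * A ^ (m - 1)) := by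
    have h₁ : 1 ≤ (2 * N - 1) * A ^ (m - 1) := by nlinarith [pow_nonneg hA₀.le (m - 1)]
    have h₂ : (0 : ℝ) ≤ (1 - A) * m := mul_nonneg (by linarith) m.cast_nonneg
    push_cast
    nlinarith [mul_le_mul_of_nonneg_left h₁ h₂]
  have hcover := Icc_subset_sum_cantorSet (affine_pow_sub_ge m hA₀.le hA₁)
    (affine_pow_sub_le m hA₀.le hA₁) hμM (by fun_prop)
  refine ⟨(2 * N : ℕ) * A ^ m, (2 * N : ℕ) * A ^ m + 2 * (1 - A ^ m), by ring, fun y hy => ?_⟩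
  obtain ⟨c, hc, hy⟩ := hcover ⟨by simpa using hy.1, by
    rw [mul_one, add_sub_cancel, one_pow, mul_one]
    have hAm : A ^ m ≤ 1 := pow_le_one₀ hA₀.le hA₁
    push_cast at hy ⊢
    nlinarith [hy.2, mul_nonneg (sub_nonneg.2 hN₁) (sub_nonneg.2 hAm)]⟩
  exact ⟨fun j => A + (1 - A) * c j, fun j => hA (hc j), hy.symm⟩

theorem sumset_contains_interval_general_general (m k : ℕ) (hk : 3 ≤ k) :
    ∃ a b : ℝ, b - a = 2 * (1 - (((3 : ℝ) ^ k - 1) / 3 ^ k) ^ m) ∧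
      Set.Icc a b ⊆
        {x : ℝ | ∃ f : Fin (2 * ⌈((3 : ℝ) ^ k / ((3 : ℝ) ^ k - 1)) ^ (m - 1)⌉₊) → ℝ,
          (∀ j, f j ∈ middleThirdsCantor) ∧ x = ∑ j, f j ^ m} := by
  have hA : ((3 : ℝ) ^ k - 1) / 3 ^ k = 1 - 3⁻¹ ^ k := by
    rw [inv_pow]
    field_simp
  have hA₀ : 0 < 1 - (3 : ℝ)⁻¹ ^ k := sub_pos.2 (pow_lt_one₀ (by norm_num) (by norm_num) (by omega))
  rw [← inv_div ((3 : ℝ) ^ k - 1), hA]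
  obtain ⟨a, b, hab, hsub⟩ := exists_Icc_subset_sum_pow_cantorSet hA₀
    (by simpa using IsCantorCylinder.one_sub_inv_three_pow k) m
  refine ⟨a, b, hab, fun x hx => ?_⟩
  obtain ⟨f, hf, rfl⟩ := hsub hx
  exact ⟨f, fun j => cantorSet_subset_middleThirdsCantor (hf j), rfl⟩

theorem sumset_contains_interval_general (m k : ℕ) (hm : 1 ≤ m) (hk : 3 ≤ k) :
    ∃ a b : ℝ, b - a = 2 * (1 - (((3 : ℝ) ^ k - 1) / 3 ^ k) ^ m) ∧
      Set.Icc a b ⊆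
        {x : ℝ | ∃ f : Fin (2 * ⌈((3 : ℝ) ^ k / ((3 : ℝ) ^ k - 1)) ^ (m - 1)⌉₊) → ℝ,
          (∀ j, f j ∈ middleThirdsCantor) ∧ x = ∑ j, f j ^ m} :=
  sumset_contains_interval_general_general m k hk
end
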